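/- Let n ≥ 1 and m = n − 1. The map φ : Matrix (Fin n) (Fin m) ℂ → Herm(n)/ℝ·I, φ(X) = X X* + ℝ·I, is surjective, and its fibres coincide exactly with the orbits of the right action of U(m) given by X ↦ X C⁻¹: that is, φ(X) = φ(Y) if and only if Y = X C for some C ∈ U(m). -/

import Mathlib

/-! Shifting a Hermitian `A` by its least eigenvalue `λ` gives `A - λ I = W Wᴴ`, where `W` is the
unitary eigenvector matrix of `A` with its columns scaled by `√(λᵢ - λ)`. The column of `W` belonging to `λ`
vanishes, so `W` may be replaced by an `n × (n - 1)` matrix; this gives surjectivity.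
Conversely, `X Xᴴ = Y Yᴴ + r I` forces `r = 0`: for `r ≠ 0` one side is positive definite, of
rank `n`, while the other has rank at most `n - 1`. Finally `X Xᴴ = Y Yᴴ` says that `Xᴴ v` and
`Yᴴ v` have the same norm for every `v`, so `Yᴴ = U Xᴴ` for the isometry `U` defined on the
range of `Xᴴ`, extended to a unitary. -/

open Matrix
open scoped ComplexOrder

/-- The real vector space of complex Hermitian (self-adjoint) `n × n` matrices,
as a real submodule of the matrix space. -/
noncomputable abbrev HermSub (n : ℕ) : Submodule ℝ (Matrix (Fin n) (Fin n) ℂ) :=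
  selfAdjoint.submodule ℝ (Matrix (Fin n) (Fin n) ℂ)

lemma one_mem_hermSub (n : ℕ) : (1 : Matrix (Fin n) (Fin n) ℂ) ∈ HermSub n :=
  IsSelfAdjoint.one _

lemma mulH_mem_hermSub {n m : ℕ} (X : Matrix (Fin n) (Fin m) ℂ) : X * Xᴴ ∈ HermSub n :=
  Matrix.isHermitian_mul_conjTranspose_self X

lemma conj_mem_hermSub {n : ℕ} (C : Matrix (Fin n) (Fin n) ℂ) (A : HermSub n) :
    C * (A : Matrix (Fin n) (Fin n) ℂ) * Cᴴ ∈ HermSub n :=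
  Matrix.isHermitian_mul_mul_conjTranspose C (A.2 : (A : Matrix (Fin n) (Fin n) ℂ).IsHermitian)

/-- The real line `ℝ·I` inside the space of Hermitian matrices. -/
noncomputable def lineI (n : ℕ) : Submodule ℝ (HermSub n) :=
  Submodule.span ℝ {(⟨1, one_mem_hermSub n⟩ : HermSub n)}

/-- The map `φ : X ↦ X X* + ℝ·I` on `n × (n-1)` complex matrices. -/
noncomputable def phi (n : ℕ) (X : Matrix (Fin n) (Fin (n - 1)) ℂ) :
    HermSub n ⧸ lineI n :=
  Submodule.Quotient.mk ⟨X * Xᴴ, mulH_mem_hermSub X⟩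

section

variable {𝕜 : Type*} [RCLike 𝕜]

theorem LinearMap.exists_linearIsometryEquiv_comp_eq_of_norm_eq {E V : Type*} [AddCommGroup E]
    [Module 𝕜 E] [NormedAddCommGroup V] [InnerProductSpace 𝕜 V] [FiniteDimensional 𝕜 V]
    (f g : E →ₗ[𝕜] V) (h : ∀ x, ‖f x‖ = ‖g x‖) : ∃ U : V ≃ₗᵢ[𝕜] V, ∀ x, U (f x) = g x := by
  have hker : LinearMap.ker f ≤ LinearMap.ker g := fun x hx => by
    rw [LinearMap.mem_ker, ← norm_eq_zero, ← h, norm_eq_zero]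
    exact hx
  let L : LinearMap.range f →ₗ[𝕜] V := (LinearMap.ker f).liftQ g hker ∘ₗ f.quotKerEquivRange.symm
  have hL : ∀ x, L ⟨f x, LinearMap.mem_range_self f x⟩ = g x := fun x => by
    simp [L, LinearMap.quotKerEquivRange_symm_apply_image]
  let Lᵢ : LinearMap.range f →ₗᵢ[𝕜] V :=
    { L with
      norm_map' := by
        rintro ⟨_, x, rfl⟩
        exact (congrArg norm (hL x)).trans (h x).symm }
  refine ⟨Lᵢ.extend.toLinearIsometryEquiv rfl, fun x => ?_⟩
  exact (Lᵢ.extend_apply ⟨f x, LinearMap.mem_range_self f x⟩).trans (hL x)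

namespace Matrix

section

variable {m n : Type*} [Fintype m] [DecidableEq m] [Fintype n] [DecidableEq n]

open scoped InnerProductSpace in
theorem norm_toEuclideanLin_conjTranspose_sq (X : Matrix n m 𝕜) (v : EuclideanSpace 𝕜 n) :
    ‖toEuclideanLin Xᴴ v‖ ^ 2 = RCLike.re ⟪v, toEuclideanLin (X * Xᴴ) v⟫_𝕜 := by
  rw [toLpLin_mul, LinearMap.comp_apply, ← conjTranspose_conjTranspose X,
    toEuclideanLin_conjTranspose_eq_adjoint Xᴴ, LinearMap.adjoint_inner_right,
    conjTranspose_conjTranspose, ← inner_self_eq_norm_sq (𝕜 := 𝕜)]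

theorem exists_unitary_mul_eq_of_mul_conjTranspose_eq {X Y : Matrix n m 𝕜}
    (h : X * Xᴴ = Y * Yᴴ) : ∃ C : Matrix m m 𝕜, C * Cᴴ = 1 ∧ Y = X * C := by
  obtain ⟨U, hU⟩ := LinearMap.exists_linearIsometryEquiv_comp_eq_of_norm_eq
    (toEuclideanLin Xᴴ) (toEuclideanLin Yᴴ) fun v => by
      rw [← sq_eq_sq₀ (norm_nonneg _) (norm_nonneg _), norm_toEuclideanLin_conjTranspose_sq,
        norm_toEuclideanLin_conjTranspose_sq, h]
  let M := toEuclideanLin.symm U.toLinearMap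
  have hM : M ∈ unitaryGroup m 𝕜 :=
    U.toMatrix_mem_unitaryGroup (EuclideanSpace.basisFun m 𝕜) (EuclideanSpace.basisFun m 𝕜)
  have hMX : M * Xᴴ = Yᴴ := toEuclideanLin.injective <| LinearMap.ext fun v => by
    simp [M, hU]
  refine ⟨Mᴴ, by rw [conjTranspose_conjTranspose]; exact mem_unitaryGroup_iff'.mp hM, ?_⟩
  rw [← conjTranspose_conjTranspose Y, ← hMX, conjTranspose_mul, conjTranspose_conjTranspose]

end

theorem mul_conjTranspose_self_ne_add_smul_one {ι κ : Type*} [Fintype ι] [DecidableEq ι]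
    [Fintype κ] (hκι : Fintype.card κ < Fintype.card ι) (X Y : Matrix ι κ 𝕜) {r : ℝ}
    (hr : 0 < r) : X * Xᴴ ≠ Y * Yᴴ + r • 1 := by
  intro h
  have hpd : (Y * Yᴴ + r • 1).PosDef :=
    PosDef.posSemidef_add (posSemidef_self_mul_conjTranspose Y) (PosDef.one.smul hr)
  have hrank : Fintype.card ι ≤ Fintype.card κ := by
    rw [← rank_of_isUnit _ hpd.isUnit, ← h, rank_self_mul_conjTranspose]
    exact rank_le_card_width X
  omega

theorem submatrix_succAbove_mul_submatrix_succAbove {ι κ α : Type*} [NonUnitalNonAssocSemiring α]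
    {k : ℕ} (A : Matrix ι (Fin (k + 1)) α) (B : Matrix (Fin (k + 1)) κ α) (j : Fin (k + 1))
    (hA : ∀ i, A i j = 0) :
    A.submatrix id j.succAbove * B.submatrix j.succAbove id = A * B := by
  ext i l
  simp [mul_apply, Fin.sum_univ_succAbove _ j, hA]

variable {n : Type*} [Fintype n] [DecidableEq n]

theorem IsHermitian.eigenvectorUnitary_mul_diagonal_sub_mul_star {A : Matrix n n 𝕜}
    (hA : A.IsHermitian) (c : ℝ) :
    (hA.eigenvectorUnitary : Matrix n n 𝕜) * diagonal (fun i => ((hA.eigenvalues i - c : ℝ) : 𝕜)) *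
      star (hA.eigenvectorUnitary : Matrix n n 𝕜) = A - c • 1 := by
  set V : Matrix n n 𝕜 := ↑hA.eigenvectorUnitary
  have hdiag : diagonal (fun i => ((hA.eigenvalues i - c : ℝ) : 𝕜)) =
      diagonal (RCLike.ofReal ∘ hA.eigenvalues) - c • 1 := by
    ext i j
    rcases eq_or_ne i j with rfl | hij <;> simp [*, RCLike.real_smul_eq_coe_mul]
  have hV : V * star V = 1 := Matrix.mem_unitaryGroup_iff.mp hA.eigenvectorUnitary.2
  conv_rhs => rw [hA.spectral_theorem, Unitary.conjStarAlgAut_apply]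
  rw [hdiag, Matrix.mul_sub, Matrix.sub_mul, Matrix.mul_smul, Matrix.smul_mul, Matrix.mul_one, hV]

theorem IsHermitian.exists_mul_conjTranspose_eq_add_smul_one {k : ℕ}
    {A : Matrix (Fin (k + 1)) (Fin (k + 1)) 𝕜} (hA : A.IsHermitian) :
    ∃ (X : Matrix (Fin (k + 1)) (Fin k) 𝕜) (r : ℝ), X * Xᴴ = A + r • 1 := by
  obtain ⟨i₀, -, hmin⟩ := Finset.univ.exists_min_image hA.eigenvalues Finset.univ_nonempty
  set c := hA.eigenvalues i₀
  set W : Matrix (Fin (k + 1)) (Fin (k + 1)) 𝕜 := (hA.eigenvectorUnitary : Matrix _ _ 𝕜) *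
    diagonal (fun i => ((√(hA.eigenvalues i - c) : ℝ) : 𝕜))
  have hW : W * Wᴴ = A - c • 1 := by
    rw [← hA.eigenvectorUnitary_mul_diagonal_sub_mul_star c, conjTranspose_mul,
      diagonal_conjTranspose, Matrix.mul_assoc, ← Matrix.mul_assoc (diagonal _),
      diagonal_mul_diagonal, ← Matrix.mul_assoc]
    congr 3
    funext i
    rw [Pi.star_apply, RCLike.star_def, RCLike.conj_ofReal, ← RCLike.ofReal_mul,
      Real.mul_self_sqrt (sub_nonneg.mpr (hmin i (Finset.mem_univ i)))]
  have hW₀ : ∀ i, W i i₀ = 0 := fun i => by simp [W, c]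
  refine ⟨W.submatrix id i₀.succAbove, -c, ?_⟩
  rw [conjTranspose_submatrix, submatrix_succAbove_mul_submatrix_succAbove _ _ _ hW₀, hW,
    neg_smul, sub_eq_add_neg]

end Matrix

end

theorem mk_eq_mk_iff_exists_eq_add_smul_one {n : ℕ} {A B : HermSub n} :
    (Submodule.Quotient.mk A : HermSub n ⧸ lineI n) = Submodule.Quotient.mk B ↔
      ∃ r : ℝ, (A : Matrix (Fin n) (Fin n) ℂ) = B + r • 1 := by
  rw [Submodule.Quotient.eq, lineI, Submodule.mem_span_singleton]
  refine exists_congr fun r => ?_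
  rw [eq_comm, ← sub_eq_iff_eq_add', ← Subtype.coe_inj]
  rfl

theorem phi_eq_phi_iff {n : ℕ} {X Y : Matrix (Fin n) (Fin (n - 1)) ℂ} :
    phi n X = phi n Y ↔ ∃ r : ℝ, X * Xᴴ = Y * Yᴴ + r • 1 :=
  mk_eq_mk_iff_exists_eq_add_smul_one

theorem phi_succ_surjective (k : ℕ) : Function.Surjective (phi (k + 1)) := by
  rintro ⟨A, hA⟩
  obtain ⟨X, r, hX⟩ := IsHermitian.exists_mul_conjTranspose_eq_add_smul_one hA
  exact ⟨X, mk_eq_mk_iff_exists_eq_add_smul_one.mpr ⟨r, hX⟩⟩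

theorem phi_succ_eq_phi_succ_iff {k : ℕ} (X Y : Matrix (Fin (k + 1)) (Fin k) ℂ) :
    phi (k + 1) X = phi (k + 1) Y ↔ ∃ C : Matrix (Fin k) (Fin k) ℂ, C * Cᴴ = 1 ∧ Y = X * C := by
  rw [phi_eq_phi_iff]
  constructor
  · rintro ⟨r, hr⟩
    have hk : Fintype.card (Fin k) < Fintype.card (Fin (k + 1)) := by simp
    rcases lt_trichotomy r 0 with hneg | rfl | hpos
    · refine absurd ?_ (mul_conjTranspose_self_ne_add_smul_one hk Y X (neg_pos.mpr hneg))
      rw [hr, neg_smul, add_neg_cancel_right]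
    · exact exists_unitary_mul_eq_of_mul_conjTranspose_eq (by simpa using hr)
    · exact absurd hr (mul_conjTranspose_self_ne_add_smul_one hk X Y hpos)
  · rintro ⟨C, hC, rfl⟩
    refine ⟨0, ?_⟩
    rw [zero_smul, add_zero, conjTranspose_mul, Matrix.mul_assoc, ← Matrix.mul_assoc C, hC,
      Matrix.one_mul]

/-- For `m = n - 1`, the map `φ(X) = X X* + ℝ·I` is surjective and its fibres coincide
with the orbits of the right action `X ↦ X C⁻¹` of `U(m)`. -/
theorem stmt15 (n : ℕ) (hn : 1 ≤ n) :
    Function.Surjective (phi n) ∧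
    ∀ X Y : Matrix (Fin n) (Fin (n - 1)) ℂ,
      phi n X = phi n Y ↔
        ∃ C : Matrix (Fin (n - 1)) (Fin (n - 1)) ℂ, C * Cᴴ = 1 ∧ Y = X * C := by
  obtain ⟨k, rfl⟩ : ∃ k, n = k + 1 := ⟨n - 1, by omega⟩
  exact ⟨phi_succ_surjective k, phi_succ_eq_phi_succ_iff⟩
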